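/- The operator L defined by (L a)(k) = a(k+1) + a(k-1) + 2 cos(ωk) a(k) on N-periodic vectors commutes with the centered discrete Fourier transform: F ∘ L = L ∘ F. -/

import Mathlib

open Real Finset Complex

/-- The centered index set `I_N = {-⌈N/2⌉+1, ..., ⌊N/2⌋}`. -/
noncomputable def In (N : ℕ) : Finset ℤ := Finset.Icc (1 - ((N : ℤ) + 1) / 2) ((N : ℤ) / 2)

/-- The centered discrete Fourier transform `(F a)(l) = N^{-1/2} ∑_{k ∈ I_N} e^{-iωkl} a(k)`,
with `ω = 2π/N`. -/
noncomputable def cdft (N : ℕ) (a : ℤ → ℂ) (l : ℤ) : ℂ :=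
  (1 / Real.sqrt N : ℝ) * ∑ k ∈ In N, Complex.exp (-Complex.I * (2 * π / N) * k * l) * a k

/-- The operator `(L a)(k) = a(k+1) + a(k-1) + 2 cos(ωk) a(k)`, with `ω = 2π/N`. -/
noncomputable def Lop (N : ℕ) (a : ℤ → ℂ) (k : ℤ) : ℂ :=
  a (k + 1) + a (k - 1) + 2 * Real.cos (2 * π * k / N) * a k

/-!
`L` is symmetric for the pairing `⟨u, a⟩ = ∑_{k ∈ I_N} u(k) a(k)` of `N`-periodic sequences,
since summing over a full period is invariant under the shift `k ↦ k + 1`. Hence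
`(F (L a))(l) = ⟨e(·, l), L a⟩ = ⟨L e(·, l), a⟩` for the kernel `e(k, l) = e^{-iωkl}`. Both shifts
of `e` in `k` multiply it by `e^{∓iωl}`, so `(L e(·, l))(k) = (2 cos ωl + 2 cos ωk) e(k, l)`; this
is symmetric in `k` and `l`, and `e` is symmetric too, so `⟨L e(·, l), a⟩ = (L (F a))(l)`.
-/

theorem Function.Periodic.sum_Ico_add_one {M : Type*} [AddCommMonoid M] {f : ℤ → M} {n : ℕ}
    (hf : Function.Periodic f n) (m : ℤ) :
    ∑ k ∈ Ico m (m + n), f (k + 1) = ∑ k ∈ Ico m (m + n), f k := by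
  rcases Nat.eq_zero_or_pos n with rfl | hn
  · simp
  rw [sum_Ico_add', ← sum_Ico_add_eq_sum_Ico_add_one (by omega),
    ← insert_Ico_add_one_left_eq_Ico (a := m) (b := m + n) (by omega), sum_insert (by simp),
    hf m, add_comm]

theorem In_eq_Ico (N : ℕ) : In N = Ico (1 - ((N : ℤ) + 1) / 2) (1 - ((N : ℤ) + 1) / 2 + N) := by
  ext k
  simp only [In, mem_Icc, mem_Ico]
  omega

theorem sum_In_add_one {M : Type*} [AddCommMonoid M] {N : ℕ} {f : ℤ → M}
    (hf : Function.Periodic f N) : ∑ k ∈ In N, f (k + 1) = ∑ k ∈ In N, f k := by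
  rw [In_eq_Ico]
  exact hf.sum_Ico_add_one _

theorem sum_In_mul_Lop {N : ℕ} {u a : ℤ → ℂ} (hu : Function.Periodic u N)
    (ha : Function.Periodic a N) :
    ∑ k ∈ In N, u k * Lop N a k = ∑ k ∈ In N, Lop N u k * a k := by
  have h₁ : ∑ k ∈ In N, u k * a (k + 1) = ∑ k ∈ In N, u (k - 1) * a k := by
    simpa only [Pi.mul_apply, add_sub_cancel_right] using sum_In_add_one ((hu.sub_const 1).mul ha)
  have h₂ : ∑ k ∈ In N, u k * a (k - 1) = ∑ k ∈ In N, u (k + 1) * a k := by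
    simpa only [Pi.mul_apply, add_sub_cancel_right] using
      (sum_In_add_one (hu.mul (ha.sub_const 1))).symm
  simp only [Lop, mul_add, add_mul, sum_add_distrib, h₁, h₂]
  congr 1
  · ring
  · exact sum_congr rfl fun k _ ↦ by ring

noncomputable def dftKernel (N : ℕ) (k l : ℤ) : ℂ := exp (-I * (2 * π / N) * k * l)

theorem cdft_eq_sum_dftKernel (N : ℕ) (a : ℤ → ℂ) (l : ℤ) :
    cdft N a l = (1 / Real.sqrt N : ℝ) * ∑ k ∈ In N, dftKernel N k l * a k :=
  rfl

theorem dftKernel_comm (N : ℕ) (k l : ℤ) : dftKernel N k l = dftKernel N l k := by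
  simp only [dftKernel]
  ring_nf

theorem dftKernel_periodic (N : ℕ) (l : ℤ) : Function.Periodic (dftKernel N · l) N := by
  intro k
  rcases eq_or_ne N 0 with rfl | hN
  · simp
  have hexp : -I * (2 * π / N) * ((k + N : ℤ) : ℂ) * l
      = -I * (2 * π / N) * k * l + (-l : ℤ) * (2 * π * I) := by
    push_cast
    field_simp
    ring
  simp only [dftKernel, hexp, Complex.exp_add, exp_int_mul_two_pi_mul_I, mul_one]

theorem two_mul_ofReal_cos (x : ℝ) : (2 * Real.cos x : ℂ) = exp (I * x) + exp (-I * x) := by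
  rw [ofReal_cos, two_cos]
  ring_nf

theorem Lop_dftKernel (N : ℕ) (k l : ℤ) :
    Lop N (dftKernel N · l) k
      = (2 * Real.cos (2 * π * l / N) + 2 * Real.cos (2 * π * k / N)) * dftKernel N k l := by
  simp only [Lop, dftKernel, two_mul_ofReal_cos]
  push_cast
  simp only [add_mul, ← Complex.exp_add]
  ring_nf

theorem Lop_dftKernel_comm (N : ℕ) (k l : ℤ) :
    Lop N (dftKernel N · l) k = Lop N (dftKernel N k ·) l := by
  simp only [dftKernel_comm N k]
  rw [Lop_dftKernel, Lop_dftKernel, add_comm (2 * (Real.cos _ : ℂ)), dftKernel_comm]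

theorem Lop_cdft (N : ℕ) (a : ℤ → ℂ) (l : ℤ) :
    Lop N (cdft N a) l
      = (1 / Real.sqrt N : ℝ) * ∑ k ∈ In N, Lop N (dftKernel N k ·) l * a k := by
  simp only [Lop, cdft_eq_sum_dftKernel, add_mul, mul_add, sum_add_distrib, mul_sum]
  congr 1
  exact sum_congr rfl fun k _ ↦ by ring

theorem stmt_12_general (N : ℕ) (a : ℤ → ℂ) (hper : ∀ k : ℤ, a (k + N) = a k) :
    ∀ l : ℤ, cdft N (Lop N a) l = Lop N (cdft N a) l := by
  intro l
  rw [cdft_eq_sum_dftKernel, sum_In_mul_Lop (dftKernel_periodic N l) hper, Lop_cdft]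
  simp only [Lop_dftKernel_comm]

theorem stmt_12 (N : ℕ) (hN : 2 ≤ N) (a : ℤ → ℂ) (hper : ∀ k : ℤ, a (k + N) = a k) :
    ∀ l : ℤ, cdft N (Lop N a) l = Lop N (cdft N a) l :=
  stmt_12_general N a hper
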